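/- arXiv:0706.2859 — 6 statements merged into one kernel-verified Lean document; each statement's English description precedes it below -/
import Mathlib

section
/- Let K be a field, C a linearly ordered type of 'terms', Γ i : (C →₀ K) →ₗ[K] (D i →₀ K) (i : I) a family of K-linear 'annihilation operators', and A ⊆ C a subset adapted to this family (i.e., for every X₀ ∈ A there exist i : I and t : D i such that the coefficient of t in Γ i (Finsupp.single X₀ 1) is nonzero while the coefficient of t in Γ i (Finsupp.single X 1) is zero for every X ∈ C with X₀ < X). If v : C →₀ K is nonzero and its support is contained in A, then there exists i : I with Γ i v ≠ 0; equivalently, a vector annihilated by all Γ i whose support is contained in A must be zero. -/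
/-- If `A` is adapted to the family of annihilation operators `Γ`, then a
nonzero vector whose support is contained in `A` cannot be annihilated by all the `Γ i`. -/
theorem adapted_ordering_not_annihilated
    {K : Type*} [Field K] {C : Type*} [LinearOrder C]
    {I : Type*} {D : I → Type*}
    (Γ : ∀ i : I, (C →₀ K) →ₗ[K] (D i →₀ K))
    (A : Set C)
    (hA : ∀ X₀ ∈ A, ∃ (i : I) (t : D i),
      Γ i (Finsupp.single X₀ 1) t ≠ 0 ∧
      ∀ X : C, X₀ < X → Γ i (Finsupp.single X 1) t = 0)
    (v : C →₀ K) (hv : v ≠ 0) (hsupp : ↑v.support ⊆ A) :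
    ∃ i : I, Γ i v ≠ 0 := by
  have hne : v.support.Nonempty := Finsupp.support_nonempty_iff.mpr hv
  set X₀ := v.support.min' hne with hX₀
  have hX₀mem : X₀ ∈ v.support := v.support.min'_mem hne
  obtain ⟨i, t, h1, h2⟩ := hA X₀ (hsupp hX₀mem)
  refine ⟨i, fun h0 => ?_⟩
  have hv' : v = v.sum fun X a => Finsupp.single X a := (Finsupp.sum_single v).symm
  have hΓ : Γ i v = v.sum fun X a => a • Γ i (Finsupp.single X 1) := by
    conv_lhs => rw [hv']
    rw [map_finsuppSum]
    refine Finsupp.sum_congr fun X _ => ?_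
    rw [← map_smul, Finsupp.smul_single, smul_eq_mul, mul_one]
  have : (Γ i v) t = v.sum fun X a => a * (Γ i (Finsupp.single X 1)) t := by
    rw [hΓ, Finsupp.sum_apply]
    exact Finsupp.sum_congr fun X _ => rfl
  rw [h0] at this
  simp only [Finsupp.coe_zero, Pi.zero_apply] at this
  have hzero : (0 : K) = v X₀ * (Γ i (Finsupp.single X₀ 1)) t := by
    rw [this, Finsupp.sum, Finset.sum_eq_single X₀]
    · intro X hX hne'
      have : X₀ < X := lt_of_le_of_ne (v.support.min'_le X hX) (Ne.symm hne')
      rw [h2 X this, mul_zero]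
    · intro h; exact absurd hX₀mem h
  have := mul_ne_zero (Finsupp.mem_support_iff.mp hX₀mem) h1
  exact this hzero.symm
end

section
/- (Theorem 2.B, kernel uniqueness.) Let K be a field, C a linearly ordered type of 'terms', Γ i : (C →₀ K) →ₗ[K] (D i →₀ K) (i : I) a family of K-linear 'annihilation operators', and A ⊆ C a subset adapted to this family, with ordering kernel C \ A. If v, w : C →₀ K are both singular (i.e., Γ i v = 0 and Γ i w = 0 for all i : I) and their coefficients agree on the ordering kernel (v X = w X for all X ∈ C \ A), then v = w. -/
/-- Theorem 2.B, kernel uniqueness: two singular vectors whose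
coefficients agree on the ordering kernel `C \ A` of an adapted subset `A` coincide. -/
theorem adapted_ordering_kernel_uniqueness
    {K : Type*} [Field K] {C : Type*} [LinearOrder C]
    {I : Type*} {D : I → Type*}
    (Γ : ∀ i : I, (C →₀ K) →ₗ[K] (D i →₀ K))
    (A : Set C)
    (hA : ∀ X₀ ∈ A, ∃ (i : I) (t : D i),
      Γ i (Finsupp.single X₀ 1) t ≠ 0 ∧
      ∀ X : C, X₀ < X → Γ i (Finsupp.single X 1) t = 0)
    (v w : C →₀ K)
    (hv : ∀ i : I, Γ i v = 0) (hw : ∀ i : I, Γ i w = 0)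
    (hagree : ∀ X : C, X ∉ A → v X = w X) :
    v = w := by
  by_contra hne
  set u := v - w with hu
  have hu0 : u ≠ 0 := sub_ne_zero.mpr hne
  have hsupp : u.support.Nonempty := Finsupp.support_nonempty_iff.mpr hu0
  set X₀ := u.support.min' hsupp with hX₀
  have hmem : X₀ ∈ u.support := u.support.min'_mem hsupp
  have huX₀ : u X₀ ≠ 0 := Finsupp.mem_support_iff.mp hmem
  have hX₀A : X₀ ∈ A := by
    by_contra h
    exact huX₀ (by simp [hu, Finsupp.sub_apply, sub_eq_zero, hagree X₀ h])
  obtain ⟨i, t, ht, hkill⟩ := hA X₀ hX₀A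
  have hΓu : Γ i u = 0 := by
    rw [hu, map_sub, hv i, hw i, sub_zero]
  have hrepr : u = ∑ X ∈ u.support, (u X) • Finsupp.single X (1 : K) := by
    conv_lhs => rw [← Finsupp.sum_single u]
    rw [Finsupp.sum]
    refine Finset.sum_congr rfl fun X _ => ?_
    rw [Finsupp.smul_single, smul_eq_mul, mul_one]
  have hsum : (Γ i u) t = ∑ X ∈ u.support, u X * (Γ i (Finsupp.single X 1) t) := by
    conv_lhs => rw [hrepr]
    rw [map_sum, Finsupp.finset_sum_apply]
    refine Finset.sum_congr rfl fun X _ => ?_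
    rw [map_smul, Finsupp.smul_apply, smul_eq_mul]
  have hsingle : ∑ X ∈ u.support, u X * (Γ i (Finsupp.single X 1) t) = u X₀ * Γ i (Finsupp.single X₀ 1) t := by
    refine Finset.sum_eq_single X₀ (fun X hX hXne => ?_) (fun h => absurd hmem h)
    have hlt : X₀ < X := lt_of_le_of_ne (u.support.min'_le X hX) (Ne.symm hXne)
    rw [hkill X hlt, mul_zero]
  rw [hΓu] at hsum
  simp only [Finsupp.coe_zero, Pi.zero_apply] at hsum
  rw [hsingle] at hsum
  exact (mul_ne_zero huX₀ ht) hsum.symm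
end

section
/- Let K be a field, C a linearly ordered type of 'terms', Γ i : (C →₀ K) →ₗ[K] (D i →₀ K) (i : I) a family of K-linear 'annihilation operators', and A ⊆ C a subset adapted to this family, with ordering kernel C \ A. Then the K-linear map which sends a vector v : C →₀ K to the restriction of its coefficient function to C \ A is injective on the submodule of singular vectors {v : C →₀ K | ∀ i, Γ i v = 0}. -/
/-- the `K`-linear map restricting the coefficient function of a vector
to the ordering kernel `C \ A` is injective on the set of singular vectors. -/
theorem adapted_ordering_restriction_injOn_singular
    {K : Type*} [Field K] {C : Type*} [LinearOrder C]
    {I : Type*} {D : I → Type*}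
    (Γ : ∀ i : I, (C →₀ K) →ₗ[K] (D i →₀ K))
    (A : Set C)
    (hA : ∀ X₀ ∈ A, ∃ (i : I) (t : D i),
      Γ i (Finsupp.single X₀ 1) t ≠ 0 ∧
      ∀ X : C, X₀ < X → Γ i (Finsupp.single X 1) t = 0) :
    Set.InjOn (LinearMap.pi fun X : (Aᶜ : Set C) => Finsupp.lapply (X : C) :
        (C →₀ K) →ₗ[K] ((Aᶜ : Set C) → K))
      {v : C →₀ K | ∀ i : I, Γ i v = 0} := by
  intro v hv w hw hvw
  set u : C →₀ K := v - w with hu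
  suffices hu0 : u = 0 by
    have := sub_eq_zero.mp hu0
    exact this
  by_contra hne
  -- support of u is contained in A
  have hsupp : ∀ X ∈ u.support, X ∈ A := by
    intro X hX
    by_contra hXA
    have : u X = 0 := by
      have h := congrFun hvw ⟨X, hXA⟩
      simp [LinearMap.pi_apply, Finsupp.lapply_apply] at h
      simp [hu, Finsupp.sub_apply, h]
    exact Finsupp.mem_support_iff.mp hX this
  have hns : u.support.Nonempty := Finsupp.support_nonempty_iff.mpr hne
  set X₀ := u.support.min' hns with hX₀
  have hX₀mem : X₀ ∈ u.support := u.support.min'_mem hns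
  obtain ⟨i, t, ht0, ht⟩ := hA X₀ (hsupp X₀ hX₀mem)
  have hsing : Γ i u = 0 := by
    simp [hu, map_sub, hv i, hw i]
  have hsum : Γ i u t = ∑ X ∈ u.support, u X * Γ i (Finsupp.single X 1) t := by
    conv_lhs => rw [← Finsupp.sum_single u]
    rw [Finsupp.sum, map_sum, Finsupp.finset_sum_apply]
    refine Finset.sum_congr rfl fun X _ => ?_
    rw [← Finsupp.smul_single_one X (u X), map_smul, Finsupp.smul_apply, smul_eq_mul]
  have hzero : ∀ X ∈ u.support, X ≠ X₀ → u X * Γ i (Finsupp.single X 1) t = 0 := by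
    intro X hX hXne
    have : X₀ < X := lt_of_le_of_ne (u.support.min'_le X hX) (Ne.symm hXne)
    rw [ht X this, mul_zero]
  have : Γ i u t = u X₀ * Γ i (Finsupp.single X₀ 1) t := by
    rw [hsum, Finset.sum_eq_single_of_mem X₀ hX₀mem hzero]
  rw [hsing] at this
  simp at this
  rcases this with h | h
  · exact Finsupp.mem_support_iff.mp hX₀mem h
  · exact ht0 h
end

section
/- (Theorem 2.C, dimension bound.) Let K be a field, C a linearly ordered type of 'terms', Γ i : (C →₀ K) →ₗ[K] (D i →₀ K) (i : I) a family of K-linear 'annihilation operators', and A ⊆ C a subset adapted to this family whose ordering kernel C \ A is finite with exactly n elements. Then any family of n + 1 singular vectors (vectors v with Γ i v = 0 for all i) is K-linearly dependent; i.e., there are at most n linearly independent singular vectors. -/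
/-- Key lemma: a singular vector supported on an adapted set `A` is zero. -/
lemma singular_supported_on_adapted_eq_zero
    {K : Type*} [Field K] {C : Type*} [LinearOrder C]
    {I : Type*} {D : I → Type*}
    (Γ : ∀ i : I, (C →₀ K) →ₗ[K] (D i →₀ K))
    (A : Set C)
    (hA : ∀ X₀ ∈ A, ∃ (i : I) (t : D i),
      Γ i (Finsupp.single X₀ 1) t ≠ 0 ∧
      ∀ X : C, X₀ < X → Γ i (Finsupp.single X 1) t = 0)
    (v : C →₀ K) (hsupp : ∀ x ∈ v.support, x ∈ A)
    (hsing : ∀ i : I, Γ i v = 0) : v = 0 := by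
  by_contra hv
  have hne : v.support.Nonempty := Finsupp.support_nonempty_iff.mpr hv
  set X₀ := v.support.min' hne with hX₀
  have hX₀mem : X₀ ∈ v.support := v.support.min'_mem hne
  obtain ⟨i, t, hnz, hvan⟩ := hA X₀ (hsupp _ hX₀mem)
  have hv' : v = ∑ X ∈ v.support, (v X) • Finsupp.single X (1 : K) := by
    conv_lhs => rw [← Finsupp.sum_single v]
    rw [Finsupp.sum]
    refine Finset.sum_congr rfl fun X _ => ?_
    rw [Finsupp.smul_single, smul_eq_mul, mul_one]
  have hΓ : Γ i v t = ∑ X ∈ v.support, (v X) * (Γ i (Finsupp.single X 1) t) := by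
    conv_lhs => rw [hv']
    rw [map_sum, Finsupp.finset_sum_apply]
    refine Finset.sum_congr rfl fun X _ => ?_
    rw [map_smul]
    rfl
  have hsum : ∑ X ∈ v.support, (v X) * (Γ i (Finsupp.single X 1) t)
      = (v X₀) * (Γ i (Finsupp.single X₀ 1) t) := by
    refine Finset.sum_eq_single X₀ (fun X hX hXne => ?_) (fun h => absurd hX₀mem h)
    have : X₀ < X := lt_of_le_of_ne (v.support.min'_le X hX) (Ne.symm hXne)
    rw [hvan X this, mul_zero]
  have : Γ i v t = (v X₀) * (Γ i (Finsupp.single X₀ 1) t) := by rw [hΓ, hsum]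
  rw [hsing i] at this
  simp only [Finsupp.coe_zero, Pi.zero_apply] at this
  exact hnz (by
    rcases mul_eq_zero.mp this.symm with h | h
    · exact absurd h (Finsupp.mem_support_iff.mp hX₀mem)
    · exact h)

/-- Theorem 2.C, dimension bound: if the ordering kernel `C \ A` of an
adapted subset `A` has exactly `n` elements, then any `n + 1` singular vectors are
`K`-linearly dependent. -/
theorem adapted_ordering_dimension_bound
    {K : Type*} [Field K] {C : Type*} [LinearOrder C]
    {I : Type*} {D : I → Type*}
    (Γ : ∀ i : I, (C →₀ K) →ₗ[K] (D i →₀ K))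
    (A : Set C)
    (hA : ∀ X₀ ∈ A, ∃ (i : I) (t : D i),
      Γ i (Finsupp.single X₀ 1) t ≠ 0 ∧
      ∀ X : C, X₀ < X → Γ i (Finsupp.single X 1) t = 0)
    (n : ℕ) (hfin : (Aᶜ : Set C).Finite) (hcard : hfin.toFinset.card = n)
    (vs : Fin (n + 1) → (C →₀ K))
    (hsing : ∀ j : Fin (n + 1), ∀ i : I, Γ i (vs j) = 0) :
    ¬ LinearIndependent K vs := by
  intro hli
  -- restriction map to functions on the finite set Aᶜ
  set F := hfin.toFinset with hF
  let L : (C →₀ K) →ₗ[K] (F → K) := LinearMap.pi (fun x => Finsupp.lapply (x : C))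
  have hcardF : Fintype.card F = n := by
    rw [Fintype.card_coe, hcard]
  -- the n+1 restricted vectors are dependent
  have hdep : ¬ LinearIndependent K (fun j => L (vs j)) := by
    intro hli'
    have h1 := hli'.fintype_card_le_finrank
    rw [Module.finrank_pi, hcardF, Fintype.card_fin] at h1
    omega
  rw [Fintype.not_linearIndependent_iff] at hdep
  obtain ⟨g, hgsum, j₀, hj₀⟩ := hdep
  set v : C →₀ K := ∑ j, g j • vs j with hv
  have hvL : L v = 0 := by
    rw [hv, map_sum]
    simpa using hgsum
  have hvsing : ∀ i : I, Γ i v = 0 := by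
    intro i
    rw [hv, map_sum]
    refine Finset.sum_eq_zero fun j _ => ?_
    rw [map_smul, hsing j i, smul_zero]
  have hvsupp : ∀ x ∈ v.support, x ∈ A := by
    intro x hx
    by_contra hxA
    have hxF : x ∈ F := by rw [hF, Set.Finite.mem_toFinset]; exact hxA
    have : v x = 0 := by
      have := congrFun hvL ⟨x, hxF⟩
      simpa [L] using this
    exact Finsupp.mem_support_iff.mp hx this
  have hv0 : v = 0 := singular_supported_on_adapted_eq_zero Γ A hA v hvsupp hvsing
  have := Fintype.linearIndependent_iff.mp hli g (by rw [← hv]; exact hv0) j₀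
  exact hj₀ this
end

section
/- (Singleton-kernel corollary, abstract core of Theorem 2.F.) Let K be a field, C a linearly ordered type of 'terms', Γ i : (C →₀ K) →ₗ[K] (D i →₀ K) (i : I) a family of K-linear 'annihilation operators', and A ⊆ C a subset adapted to this family whose ordering kernel C \ A consists of exactly one element. Then any two singular vectors (vectors v with Γ i v = 0 for all i) are K-linearly dependent; in particular, if v and w are singular and v ≠ 0, then w is a scalar multiple of v, so singular vectors are unique up to proportionality. -/
/-- Key lemma: a singular vector vanishing at the kernel point is zero. -/
lemma singular_vanish_kernel_eq_zero
    {K : Type*} [Field K] {C : Type*} [LinearOrder C]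
    {I : Type*} {D : I → Type*}
    (Γ : ∀ i : I, (C →₀ K) →ₗ[K] (D i →₀ K))
    (A : Set C)
    (hA : ∀ X₀ ∈ A, ∃ (i : I) (t : D i),
      Γ i (Finsupp.single X₀ 1) t ≠ 0 ∧
      ∀ X : C, X₀ < X → Γ i (Finsupp.single X 1) t = 0)
    (X₀ : C) (hker : (Aᶜ : Set C) = {X₀})
    (u : C →₀ K) (hu : ∀ i : I, Γ i u = 0) (h0 : u X₀ = 0) : u = 0 := by
  by_contra hne
  have hs : u.support.Nonempty := Finsupp.support_nonempty_iff.mpr hne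
  set m := u.support.min' hs with hm
  have hmem : m ∈ u.support := u.support.min'_mem hs
  have hmne : m ≠ X₀ := by
    intro h
    exact (Finsupp.mem_support_iff.mp hmem) (h ▸ h0)
  have hmA : m ∈ A := by
    by_contra h
    have : m ∈ (Aᶜ : Set C) := h
    rw [hker] at this
    exact hmne this
  obtain ⟨i, t, ht1, ht2⟩ := hA m hmA
  have hexp : Γ i u = u.sum fun a b => Γ i (Finsupp.single a b) := by
    conv_lhs => rw [← Finsupp.sum_single u]
    exact map_finsuppSum (Γ i) u _
  have h1 : (u.support.sum fun X => (Γ i (Finsupp.single X (u X))) t) = 0 := by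
    have := congrArg (fun f => f t) (hu i)
    simp only [hexp, Finsupp.sum] at this ⊢
    simpa [Finsupp.finset_sum_apply] using this
  have h2 : (u.support.sum fun X => (Γ i (Finsupp.single X (u X))) t)
      = (Γ i (Finsupp.single m (u m))) t := by
    apply Finset.sum_eq_single_of_mem m hmem
    intro X hX hXne
    have hlt : m < X := lt_of_le_of_ne (u.support.min'_le X hX) (Ne.symm hXne)
    have : Finsupp.single X (u X) = (u X) • Finsupp.single X (1 : K) := by
      rw [Finsupp.smul_single, smul_eq_mul, mul_one]
    rw [this, map_smul]
    simp [ht2 X hlt]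
  have h3 : (Γ i (Finsupp.single m (u m))) t = u m * (Γ i (Finsupp.single m (1:K))) t := by
    have : Finsupp.single m (u m) = (u m) • Finsupp.single m (1 : K) := by
      rw [Finsupp.smul_single, smul_eq_mul, mul_one]
    rw [this, map_smul]
    simp
  rw [h2, h3] at h1
  exact (mul_ne_zero (Finsupp.mem_support_iff.mp hmem) ht1) h1

/-- singleton kernel: if the ordering kernel `C \ A` has exactly one
element, then any two singular vectors are linearly dependent; in particular a
singular vector `w` is a scalar multiple of any nonzero singular vector `v`. -/
theorem adapted_ordering_singleton_kernel_unique_up_to_scalar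
    {K : Type*} [Field K] {C : Type*} [LinearOrder C]
    {I : Type*} {D : I → Type*}
    (Γ : ∀ i : I, (C →₀ K) →ₗ[K] (D i →₀ K))
    (A : Set C)
    (hA : ∀ X₀ ∈ A, ∃ (i : I) (t : D i),
      Γ i (Finsupp.single X₀ 1) t ≠ 0 ∧
      ∀ X : C, X₀ < X → Γ i (Finsupp.single X 1) t = 0)
    (hker : ∃ X₀ : C, (Aᶜ : Set C) = {X₀})
    (v w : C →₀ K)
    (hv : ∀ i : I, Γ i v = 0) (hw : ∀ i : I, Γ i w = 0) :
    ¬ LinearIndependent K ![v, w] ∧ (v ≠ 0 → ∃ c : K, w = c • v) := by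
  obtain ⟨X₀, hker⟩ := hker
  by_cases hv0 : v = 0
  · constructor
    · intro h
      exact (h.ne_zero 0) (by simp [hv0])
    · intro h; exact absurd hv0 h
  · have hvX : v X₀ ≠ 0 := by
      intro h
      exact hv0 (singular_vanish_kernel_eq_zero Γ A hA X₀ hker v hv h)
    set c := w X₀ / v X₀ with hc
    have hwc : w = c • v := by
      have hu : ∀ i : I, Γ i (w - c • v) = 0 := by
        intro i
        simp [map_sub, map_smul, hv i, hw i]
      have h0 : (w - c • v) X₀ = 0 := by
        simp [hc, div_mul_cancel₀ _ hvX]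
      have := singular_vanish_kernel_eq_zero Γ A hA X₀ hker _ hu h0
      exact sub_eq_zero.mp this
    constructor
    · intro h
      have hli := Fintype.linearIndependent_iff.mp h ![c, -1]
      have hsum : (∑ j : Fin 2, (![c, -1] j) • (![v, w] j)) = 0 := by
        simp [Fin.sum_univ_two, hwc]
      have := hli hsum 1
      simp at this
    · intro _; exact ⟨c, hwc⟩
end

section
/- (Theorem 2.D, trivial kernel.) Let K be a field, C a linearly ordered type of 'terms', Γ i : (C →₀ K) →ₗ[K] (D i →₀ K) (i : I) a family of K-linear 'annihilation operators', and suppose the whole set A = C is adapted to this family, so the ordering kernel C \ A is empty. Then every singular vector is zero: if v : C →₀ K satisfies Γ i v = 0 for all i : I, then v = 0. -/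
/-- Theorem 2.D, trivial kernel: if the whole set of terms `A = C` is
adapted to the family of annihilation operators, so that the ordering kernel is empty,
then every singular vector is zero. -/
theorem adapted_ordering_trivial_kernel_no_singular
    {K : Type*} [Field K] {C : Type*} [LinearOrder C]
    {I : Type*} {D : I → Type*}
    (Γ : ∀ i : I, (C →₀ K) →ₗ[K] (D i →₀ K))
    (A : Set C) (hAuniv : A = Set.univ)
    (hA : ∀ X₀ ∈ A, ∃ (i : I) (t : D i),
      Γ i (Finsupp.single X₀ 1) t ≠ 0 ∧
      ∀ X : C, X₀ < X → Γ i (Finsupp.single X 1) t = 0)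
    (v : C →₀ K) (hv : ∀ i : I, Γ i v = 0) :
    v = 0 := by
  by_contra hne
  have hsupp : v.support.Nonempty := Finsupp.support_nonempty_iff.2 hne
  set X₀ := v.support.min' hsupp with hX₀
  have hX₀mem : X₀ ∈ v.support := v.support.min'_mem hsupp
  obtain ⟨i, t, ht, hkill⟩ := hA X₀ (hAuniv ▸ Set.mem_univ X₀)
  have hrepr : v = ∑ x ∈ v.support, (v x) • Finsupp.single x (1 : K) := by
    conv_lhs => rw [← v.sum_single]
    simp [Finsupp.sum, Finsupp.smul_single]
  have h0 : (Γ i v) t = 0 := by rw [hv i]; rfl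
  rw [hrepr, map_sum] at h0
  simp only [map_smul] at h0
  have : (∑ x ∈ v.support, v x • Γ i (Finsupp.single x 1)) t
      = ∑ x ∈ v.support, v x * (Γ i (Finsupp.single x 1)) t := by
    rw [Finsupp.finset_sum_apply]
    simp [Finsupp.smul_apply]
  rw [this] at h0
  have hsum : ∑ x ∈ v.support, v x * (Γ i (Finsupp.single x 1)) t
      = v X₀ * (Γ i (Finsupp.single X₀ 1)) t := by
    apply Finset.sum_eq_single_of_mem _ hX₀mem
    intro x hx hxne
    have : X₀ < x := lt_of_le_of_ne (v.support.min'_le x hx) (Ne.symm hxne)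
    rw [hkill x this, mul_zero]
  rw [hsum] at h0
  exact ht ((mul_eq_zero.1 h0).resolve_left (Finsupp.mem_support_iff.1 hX₀mem))
end
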